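/- arXiv:2301.04576 — 8 statements merged into one kernel-verified Lean document; each statement's English description precedes it below -/
import Mathlib

section
/- Let θ, β ∈ ℝ and set o = (cos θ, sin θ), o⊥ = (sin θ, −cos θ), ê = (cos β, sin β). Let H be an invertible real 2×2 matrix, K_f ∈ ℝ, e ∈ ℝ, d ∈ ℝ with d ≠ 0, and w ∈ ℝ². Define v = K_f e ⟨o, H⁻¹ê⟩ + ⟨o, H⁻¹w⟩ and ω = −(K_f e / d) ⟨o⊥, H⁻¹ê⟩ − (1/d) ⟨o⊥, H⁻¹w⟩. Then ⟨ê, w − H(v·o − d·ω·o⊥)⟩ = −K_f · e. -/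
open Real Matrix

/-- Algebraic core of Theorem 1: with `o = (cos θ, sin θ)`,
`o⊥ = (sin θ, −cos θ)`, `ê = (cos β, sin β)`, `H` an invertible `2×2` matrix, `d ≠ 0`,
and the orientation-unconstrained flocking controller
`v = K_f e ⟨o, H⁻¹ê⟩ + ⟨o, H⁻¹w⟩`,
`ω = −(K_f e/d) ⟨o⊥, H⁻¹ê⟩ − (1/d) ⟨o⊥, H⁻¹w⟩`,
one has `⟨ê, w − H(v·o − d·ω·o⊥)⟩ = −K_f e`. -/
theorem stmt_4 (θ β Kf e d : ℝ) (hd : d ≠ 0)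
    (H : Matrix (Fin 2) (Fin 2) ℝ) (hH : IsUnit H.det)
    (w : Fin 2 → ℝ) (v ω : ℝ)
    (hv : v = Kf * e * (![cos θ, sin θ] ⬝ᵥ H⁻¹.mulVec ![cos β, sin β])
            + ![cos θ, sin θ] ⬝ᵥ H⁻¹.mulVec w)
    (hω : ω = -(Kf * e / d) * (![sin θ, -cos θ] ⬝ᵥ H⁻¹.mulVec ![cos β, sin β])
            - (1 / d) * (![sin θ, -cos θ] ⬝ᵥ H⁻¹.mulVec w)) :
    ![cos β, sin β] ⬝ᵥ
        (w - H.mulVec (v • ![cos θ, sin θ] - (d * ω) • ![sin θ, -cos θ])) = -Kf * e := by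
  have h1 := sin_sq_add_cos_sq θ
  have key : v • ![cos θ, sin θ] - (d * ω) • ![sin θ, -cos θ]
      = H⁻¹.mulVec ((Kf * e) • ![cos β, sin β] + w) := by
    subst hv hω
    funext i
    fin_cases i <;>
      simp [Matrix.mulVec, dotProduct, Fin.sum_univ_two, mul_comm] <;>
      field_simp
    · linear_combination ((H⁻¹ 0 0 * (Kf * e * cos β + w 0) +
        H⁻¹ 0 1 * (Kf * e * sin β + w 1))) * h1
    · linear_combination ((H⁻¹ 1 0 * (Kf * e * cos β + w 0) +
        H⁻¹ 1 1 * (Kf * e * sin β + w 1))) * h1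
  rw [key, Matrix.mulVec_mulVec, Matrix.mul_nonsing_inv H hH]
  have h2 := sin_sq_add_cos_sq β
  simp [dotProduct, Fin.sum_univ_two, Matrix.vecHead, Matrix.vecTail]
  linear_combination (-(Kf * e)) * h2
end

section
/- Let J : ℝ² → ℝ be twice continuously differentiable, K_f ∈ ℝ, d ∈ (0,1), and d*_{∇J} ∈ ℝ. Fix an agent i with a finite nonempty neighbor index set N'_i of cardinality N'. For each j ∈ N'_i let p_j : [0,∞) → ℝ² be differentiable with ṗ_j(t) = v_j(t) o(θ_j(t)) for some functions v_j, θ_j, and let (x_i, y_i, θ_i) be a unicycle trajectory with inputs v_i, ω_i. Let p_{io}(t) = (x_i(t) + d cos θ_i(t), y_i(t) + d sin θ_i(t)) and H(t) = ∇²J(p_{io}(t)), assumed invertible for all t. Define m_i(t) = (1/N') Σ_{j∈N'_i} ∇J(p_j(t)) − ∇J(p_{io}(t)), assume m_i(t) ≠ 0 for all t, and set ê_i(t) = m_i(t)/‖m_i(t)‖ and e_i(t) = ‖m_i(t)‖ − d*_{∇J}. If the control inputs are v_i = K_f e_i ⟨o(θ_i), H⁻¹ ê_i⟩ + (1/N')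 Σ_{j∈N'_i} v_j ⟨o(θ_i), H⁻¹ ∇²J(p_j) o(θ_j)⟩ and ω_i = −(K_f e_i / d) ⟨o⊥(θ_i), H⁻¹ ê_i⟩ − (1/N') Σ_{j∈N'_i} (v_j / d) ⟨o⊥(θ_i), H⁻¹ ∇²J(p_j) o(θ_j)⟩, then e_i is differentiable and ė_i(t) = −K_f e_i(t) for all t ≥ 0. -/
open Real Filter
open scoped RealInnerProductSpace

/-- The planar vector with the given coordinates, as an element of `ℝ²`. -/
noncomputable def vec2 (a b : ℝ) : EuclideanSpace ℝ (Fin 2) :=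
  (WithLp.equiv 2 (Fin 2 → ℝ)).symm ![a, b]

/-- The Hessian `∇²J(p)` of a scalar field on `ℝ²`, as the derivative of the gradient. -/
noncomputable def hess (J : EuclideanSpace ℝ (Fin 2) → ℝ) (p : EuclideanSpace ℝ (Fin 2)) :
    EuclideanSpace ℝ (Fin 2) →L[ℝ] EuclideanSpace ℝ (Fin 2) :=
  fderiv ℝ (gradient J) p

lemma ortho_decomp (θ : ℝ) (w : EuclideanSpace ℝ (Fin 2)) :
    ⟪vec2 (cos θ) (sin θ), w⟫ • vec2 (cos θ) (sin θ)
      + ⟪vec2 (sin θ) (-cos θ), w⟫ • vec2 (sin θ) (-cos θ) = w := by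
  have hsc := sin_sq_add_cos_sq θ
  ext i
  fin_cases i
  · simp [vec2, PiLp.inner_apply, Fin.sum_univ_two]
    linear_combination hsc * w 0
  · simp [vec2, PiLp.inner_apply, Fin.sum_univ_two]
    linear_combination hsc * w 1

lemma hasDerivAt_vec2 {f g : ℝ → ℝ} {f' g' : ℝ} {t : ℝ}
    (hf : HasDerivAt f f' t) (hg : HasDerivAt g g' t) :
    HasDerivAt (fun s => vec2 (f s) (g s)) (vec2 f' g') t := by
  have key : ∀ a b : ℝ, vec2 a b = a • vec2 1 0 + b • vec2 0 1 := by
    intro a b; ext i; fin_cases i <;> simp [vec2]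
  have h2 : HasDerivAt (fun s => f s • vec2 1 0 + g s • vec2 0 1)
      (f' • vec2 1 0 + g' • vec2 0 1) t := (hf.smul_const _).add (hg.smul_const _)
  rw [key f' g']
  exact h2.congr_of_eventuallyEq (by filter_upwards with s using (key _ _))

lemma hasFDerivAt_gradient {J : EuclideanSpace ℝ (Fin 2) → ℝ} (hJ : ContDiff ℝ 2 J)
    (x : EuclideanSpace ℝ (Fin 2)) : HasFDerivAt (gradient J) (hess J x) x := by
  have h1 : ContDiff ℝ 1 (fderiv ℝ J) := hJ.fderiv_right (le_refl _)
  have hdiff : Differentiable ℝ (gradient J) := by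
    have : gradient J = fun y => (InnerProductSpace.toDual ℝ _).symm (fderiv ℝ J y) := rfl
    rw [this]
    exact fun y => ((InnerProductSpace.toDual ℝ _).symm.differentiable.differentiableAt).comp y
      (h1.differentiable one_ne_zero y)
  exact (hdiff x).hasFDerivAt

/-- Flocking error dynamics of Theorem 1: with a `C²` field `J`, neighbors
`p_j` moving with `ṗ_j = v_j o(θ_j)`, agent `i` a unicycle with offset point
`p_io = (x_i + d cos θ_i, y_i + d sin θ_i)`, invertible Hessian `H = ∇²J(p_io)` (with
inverse `Hinv`), nonzero averaged gradient difference
`m_i = (1/N')Σ_j ∇J(p_j) − ∇J(p_io)`, `ê_i = m_i/‖m_i‖`, `e_i = ‖m_i‖ − d*`, and the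
orientation-unconstrained distributed flocking controller, the flocking error `e_i` is
differentiable with `ė_i = −K_f e_i` for all `t ≥ 0`. -/
theorem stmt_5
    (J : EuclideanSpace ℝ (Fin 2) → ℝ) (hJ : ContDiff ℝ 2 J)
    (Kf d dstar : ℝ) (hd : d ∈ Set.Ioo (0:ℝ) 1)
    (ι : Type) [Fintype ι] [Nonempty ι]
    (p : ι → ℝ → EuclideanSpace ℝ (Fin 2)) (v : ι → ℝ → ℝ) (θ : ι → ℝ → ℝ)
    (hp : ∀ j, ∀ t ≥ (0:ℝ),
      HasDerivAt (p j) (v j t • vec2 (cos (θ j t)) (sin (θ j t))) t)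
    (xi yi θi vi ωi : ℝ → ℝ)
    (hxi : ∀ t ≥ (0:ℝ), HasDerivAt xi (vi t * cos (θi t)) t)
    (hyi : ∀ t ≥ (0:ℝ), HasDerivAt yi (vi t * sin (θi t)) t)
    (hθi : ∀ t ≥ (0:ℝ), HasDerivAt θi (ωi t) t)
    (pio : ℝ → EuclideanSpace ℝ (Fin 2))
    (hpio : ∀ t, pio t = vec2 (xi t + d * cos (θi t)) (yi t + d * sin (θi t)))
    (Hinv : ℝ → EuclideanSpace ℝ (Fin 2) →L[ℝ] EuclideanSpace ℝ (Fin 2))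
    (hHinv : ∀ t, (Hinv t).comp (hess J (pio t)) = ContinuousLinearMap.id ℝ _ ∧
                  (hess J (pio t)).comp (Hinv t) = ContinuousLinearMap.id ℝ _)
    (m : ℝ → EuclideanSpace ℝ (Fin 2))
    (hm : ∀ t, m t = ((Fintype.card ι : ℝ))⁻¹ • (∑ j, gradient J (p j t)) - gradient J (pio t))
    (hmne : ∀ t, m t ≠ 0)
    (e : ℝ → ℝ) (he : ∀ t, e t = ‖m t‖ - dstar)
    (hvi : ∀ t ≥ (0:ℝ), vi t =
      Kf * e t * ⟪vec2 (cos (θi t)) (sin (θi t)), Hinv t (‖m t‖⁻¹ • m t)⟫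
      + ((Fintype.card ι : ℝ))⁻¹ * ∑ j, v j t *
          ⟪vec2 (cos (θi t)) (sin (θi t)),
            Hinv t (hess J (p j t) (vec2 (cos (θ j t)) (sin (θ j t))))⟫)
    (hωi : ∀ t ≥ (0:ℝ), ωi t =
      -(Kf * e t / d) * ⟪vec2 (sin (θi t)) (-cos (θi t)), Hinv t (‖m t‖⁻¹ • m t)⟫
      - ((Fintype.card ι : ℝ))⁻¹ * ∑ j, (v j t / d) *
          ⟪vec2 (sin (θi t)) (-cos (θi t)),
            Hinv t (hess J (p j t) (vec2 (cos (θ j t)) (sin (θ j t))))⟫) :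
    ∀ t ≥ (0:ℝ), HasDerivAt e (-Kf * e t) t := by
  intro t ht
  have hd0 : d ≠ 0 := ne_of_gt hd.1
  -- derivatives of gradients along trajectories
  have hgpj : ∀ j, HasDerivAt (fun s => gradient J (p j s))
      (v j t • hess J (p j t) (vec2 (cos (θ j t)) (sin (θ j t)))) t := by
    intro j
    have := (hasFDerivAt_gradient hJ (p j t)).comp_hasDerivAt t (hp j t ht)
    simp only [map_smul] at this
    exact this
  -- derivative of pio
  have hA : HasDerivAt (fun s => xi s + d * cos (θi s))
      (vi t * cos (θi t) + d * (-sin (θi t) * ωi t)) t :=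
    (hxi t ht).add (((hθi t ht).cos).const_mul d)
  have hB : HasDerivAt (fun s => yi s + d * sin (θi s))
      (vi t * sin (θi t) + d * (cos (θi t) * ωi t)) t :=
    (hyi t ht).add (((hθi t ht).sin).const_mul d)
  have hpio' : HasDerivAt pio
      (vec2 (vi t * cos (θi t) + d * (-sin (θi t) * ωi t))
        (vi t * sin (θi t) + d * (cos (θi t) * ωi t))) t :=
    (hasDerivAt_vec2 hA hB).congr_of_eventuallyEq
      (by filter_upwards with s using (hpio s))
  have hgpio : HasDerivAt (fun s => gradient J (pio s))
      (hess J (pio t) (vec2 (vi t * cos (θi t) + d * (-sin (θi t) * ωi t))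
        (vi t * sin (θi t) + d * (cos (θi t) * ωi t)))) t :=
    (hasFDerivAt_gradient hJ (pio t)).comp_hasDerivAt t hpio'
  -- derivative of m
  have hm1 : HasDerivAt m
      (((Fintype.card ι : ℝ))⁻¹ •
          (∑ j, v j t • hess J (p j t) (vec2 (cos (θ j t)) (sin (θ j t))))
        - hess J (pio t) (vec2 (vi t * cos (θi t) + d * (-sin (θi t) * ωi t))
            (vi t * sin (θi t) + d * (cos (θi t) * ωi t)))) t := by
    have hsum : HasDerivAt (fun s => ∑ j, gradient J (p j s))
        (∑ j, v j t • hess J (p j t) (vec2 (cos (θ j t)) (sin (θ j t)))) t :=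
      HasDerivAt.fun_sum fun j _ => hgpj j
    exact ((hsum.const_smul _).sub hgpio).congr_of_eventuallyEq
      (by filter_upwards with s using (hm s))
  -- the controller vector u
  set u : EuclideanSpace ℝ (Fin 2) :=
    (Kf * e t) • Hinv t (‖m t‖⁻¹ • m t)
      + ((Fintype.card ι : ℝ))⁻¹ •
          ∑ j, v j t • Hinv t (hess J (p j t) (vec2 (cos (θ j t)) (sin (θ j t)))) with hu
  have hviu : vi t = ⟪vec2 (cos (θi t)) (sin (θi t)), u⟫ := by
    rw [hvi t ht, hu, inner_add_right, real_inner_smul_right, real_inner_smul_right, inner_sum]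
    simp_rw [real_inner_smul_right]
  have hωiu : -(d * ωi t) = ⟪vec2 (sin (θi t)) (-cos (θi t)), u⟫ := by
    rw [hωi t ht, hu, inner_add_right, real_inner_smul_right, real_inner_smul_right, inner_sum]
    simp_rw [real_inner_smul_right]
    have hs : ∑ j, (v j t / d) *
        ⟪vec2 (sin (θi t)) (-cos (θi t)),
          Hinv t (hess J (p j t) (vec2 (cos (θ j t)) (sin (θ j t))))⟫
        = d⁻¹ * ∑ j, v j t *
        ⟪vec2 (sin (θi t)) (-cos (θi t)),
          Hinv t (hess J (p j t) (vec2 (cos (θ j t)) (sin (θ j t))))⟫ := by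
      rw [Finset.mul_sum]
      exact Finset.sum_congr rfl fun j _ => by ring
    rw [hs]
    generalize ⟪vec2 (sin (θi t)) (-cos (θi t)), Hinv t (‖m t‖⁻¹ • m t)⟫ = X
    generalize (∑ j, v j t *
        ⟪vec2 (sin (θi t)) (-cos (θi t)),
          Hinv t (hess J (p j t) (vec2 (cos (θ j t)) (sin (θ j t))))⟫) = S
    field_simp
    ring
  have hpdotu : vec2 (vi t * cos (θi t) + d * (-sin (θi t) * ωi t))
      (vi t * sin (θi t) + d * (cos (θi t) * ωi t)) = u := by
    have hdecomp := ortho_decomp (θi t) u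
    rw [← hviu, ← hωiu] at hdecomp
    rw [← hdecomp]
    ext i
    fin_cases i <;> · simp [vec2]; ring
  have hHid : ∀ x, hess J (pio t) (Hinv t x) = x := by
    intro x
    have h2 := (hHinv t).2
    calc hess J (pio t) (Hinv t x) = ((hess J (pio t)).comp (Hinv t)) x := rfl
      _ = x := by rw [h2]; rfl
  have hHu : hess J (pio t) u
      = (Kf * e t) • (‖m t‖⁻¹ • m t)
        + ((Fintype.card ι : ℝ))⁻¹ •
            ∑ j, v j t • hess J (p j t) (vec2 (cos (θ j t)) (sin (θ j t))) := by
    rw [hu]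
    simp only [map_add, map_smul, map_sum, hHid]
  have hm2 : HasDerivAt m (-(Kf * e t) • (‖m t‖⁻¹ • m t)) t := by
    have heq : ((Fintype.card ι : ℝ))⁻¹ •
          (∑ j, v j t • hess J (p j t) (vec2 (cos (θ j t)) (sin (θ j t))))
        - hess J (pio t) (vec2 (vi t * cos (θi t) + d * (-sin (θi t) * ωi t))
            (vi t * sin (θi t) + d * (cos (θi t) * ωi t)))
        = -(Kf * e t) • (‖m t‖⁻¹ • m t) := by
      rw [hpdotu, hHu]
      module
    rwa [heq] at hm1
  -- derivative of the norm
  have hmm : ⟪m t, m t⟫ = ‖m t‖ * ‖m t‖ := real_inner_self_eq_norm_mul_norm (m t)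
  have hn0 : ‖m t‖ ≠ 0 := norm_ne_zero_iff.mpr (hmne t)
  have hinne : ⟪m t, m t⟫ ≠ (0:ℝ) := by rw [hmm]; positivity
  have hφ : HasDerivAt (fun s => ⟪m s, m s⟫)
      (⟪m t, -(Kf * e t) • (‖m t‖⁻¹ • m t)⟫ + ⟪-(Kf * e t) • (‖m t‖⁻¹ • m t), m t⟫) t :=
    hm2.inner ℝ hm2
  have hsqrt : HasDerivAt (fun s => Real.sqrt ⟪m s, m s⟫)
      (1 / (2 * Real.sqrt ⟪m t, m t⟫) *
        (⟪m t, -(Kf * e t) • (‖m t‖⁻¹ • m t)⟫ + ⟪-(Kf * e t) • (‖m t‖⁻¹ • m t), m t⟫)) t :=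
    (Real.hasDerivAt_sqrt hinne).comp t hφ
  have hval : 1 / (2 * Real.sqrt ⟪m t, m t⟫) *
      (⟪m t, -(Kf * e t) • (‖m t‖⁻¹ • m t)⟫ + ⟪-(Kf * e t) • (‖m t‖⁻¹ • m t), m t⟫)
      = -Kf * e t := by
    rw [hmm, Real.sqrt_mul_self (norm_nonneg _)]
    simp only [real_inner_smul_left, real_inner_smul_right]
    rw [real_inner_self_eq_norm_mul_norm]
    field_simp
    ring
  have hee : (fun s => Real.sqrt ⟪m s, m s⟫ - dstar) = e := by
    funext s
    rw [he s, real_inner_self_eq_norm_mul_norm, Real.sqrt_mul_self (norm_nonneg _)]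
  have hfin := hsqrt.sub_const dstar
  rw [hee, hval] at hfin
  exact hfin
end

section
/- Let α : ℝ → ℝ be a locally Lipschitz extended class-K function, and let h : [0,∞) → ℝ be differentiable with h′(t) ≥ −α(h(t)) for all t ≥ 0. If h(0) ≥ 0, then h(t) ≥ 0 for all t ≥ 0. -/
/-- ZCBF invariance principle: if `α` is a locally Lipschitz extended
class-K function (`α 0 = 0`, `α` strictly increasing) and `h` is differentiable with
`h′(t) ≥ −α(h(t))` for all `t ≥ 0` and `h(0) ≥ 0`, then `h(t) ≥ 0` for all `t ≥ 0`. -/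
theorem stmt_7 (α : ℝ → ℝ) (hlip : LocallyLipschitz α)
    (hα0 : α 0 = 0) (hmono : StrictMono α)
    (h h' : ℝ → ℝ)
    (hderiv : ∀ t ≥ (0:ℝ), HasDerivAt h (h' t) t)
    (hineq : ∀ t ≥ (0:ℝ), h' t ≥ -α (h t))
    (h0 : h 0 ≥ 0) :
    ∀ t ≥ (0:ℝ), h t ≥ 0 := by
  intro t₁ ht₁
  by_contra hneg
  push_neg at hneg
  have ht₁pos : (0:ℝ) < t₁ := by
    rcases lt_or_eq_of_le ht₁ with h1 | h1
    · exact h1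
    · exact absurd h0 (by rw [h1]; linarith)
  -- h is continuous on [0, t₁]
  have hcont : ContinuousOn h (Set.Icc 0 t₁) := fun x hx =>
    ((hderiv x hx.1).continuousAt).continuousWithinAt
  -- the set where h is nonnegative
  set S : Set ℝ := Set.Icc 0 t₁ ∩ h ⁻¹' (Set.Ici 0) with hS
  have hSclosed : IsClosed S :=
    hcont.preimage_isClosed_of_isClosed isClosed_Icc isClosed_Ici
  have hSne : S.Nonempty := ⟨0, ⟨le_refl 0, le_of_lt ht₁pos⟩, h0⟩
  have hSbdd : BddAbove S := ⟨t₁, fun x hx => hx.1.2⟩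
  set s := sSup S with hs
  have hsS : s ∈ S := hSclosed.csSup_mem hSne hSbdd
  have hs0 : 0 ≤ s := hsS.1.1
  have hst₁ : s ≤ t₁ := hsS.1.2
  have hhs : 0 ≤ h s := hsS.2
  have hslt : s < t₁ := lt_of_le_of_ne hst₁ (fun heq => absurd hhs (by rw [heq]; linarith))
  -- on (s, t₁], h < 0
  have hnegmid : ∀ x, s < x → x ≤ t₁ → h x < 0 := by
    intro x hsx hxt
    rcases lt_or_ge (h x) 0 with hlt | hge
    · exact hlt
    · exact absurd (le_csSup hSbdd ⟨⟨le_trans hs0 (le_of_lt hsx), hxt⟩, hge⟩)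
        (not_le.mpr hsx)
  -- h is strictly monotone on [s, t₁]
  have hsm : StrictMonoOn h (Set.Icc s t₁) := by
    apply strictMonoOn_of_hasDerivWithinAt_pos (convex_Icc s t₁)
      (hcont.mono (Set.Icc_subset_Icc hs0 le_rfl))
      (fun x hx => ((hderiv x (by
        rw [interior_Icc] at hx
        exact le_trans hs0 (le_of_lt hx.1))).hasDerivWithinAt))
    intro x hx
    rw [interior_Icc] at hx
    have hx0 : (0:ℝ) ≤ x := le_trans hs0 (le_of_lt hx.1)
    have hxneg : h x < 0 := hnegmid x hx.1 (le_of_lt hx.2)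
    have : α (h x) < 0 := by
      have := hmono hxneg
      rwa [hα0] at this
    linarith [hineq x hx0]
  have := hsm (Set.left_mem_Icc.mpr hst₁) (Set.right_mem_Icc.mpr hst₁) hslt
  linarith
end

section
/- Let α : ℝ → ℝ be a locally Lipschitz extended class-K function, let h : ℝⁿ × ℝⁿ → ℝ be continuously differentiable, let ξ_i, ξ_j : [0,∞) → ℝⁿ be continuously differentiable, and let γ_{ij}, γ_{ji} : [0,∞) → ℝ be continuous. Set H(t) = h(ξ_i(t), ξ_j(t)). Suppose the two distributed constraints hold for all t ≥ 0: ⟨∇₁h(ξ_i(t), ξ_j(t)), ξ̇_i(t)⟩ ≥ −γ_{ij}(t) α(H(t)) and ⟨∇₂h(ξ_i(t), ξ_j(t)), ξ̇_j(t)⟩ ≥ −γ_{ji}(t) α(H(t)), where ∇₁h and ∇₂h denote the gradients of h with respect to its first and second ℝⁿ argument. If H(0) ≥ 0, then H(t) ≥ 0 for all t ≥ 0. -/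
open Filter
open scoped RealInnerProductSpace Topology

/-- Distributed ZCBF connectivity constraints (core of property P1 of
Theorem 2): let `α` be a locally Lipschitz extended class-K function, `h : ℝⁿ × ℝⁿ → ℝ`
continuously differentiable, `ξ_i, ξ_j` continuously differentiable trajectories, and
`γ_{ij}, γ_{ji}` continuous.  If for all `t ≥ 0` the two distributed constraints
`⟨∇₁h(ξ_i, ξ_j), ξ̇_i⟩ ≥ −γ_{ij} α(h(ξ_i, ξ_j))` and
`⟨∇₂h(ξ_i, ξ_j), ξ̇_j⟩ ≥ −γ_{ji} α(h(ξ_i, ξ_j))` hold and `h(ξ_i(0), ξ_j(0)) ≥ 0`,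
then `h(ξ_i(t), ξ_j(t)) ≥ 0` for all `t ≥ 0`. -/
theorem stmt_8 (n : ℕ)
    (α : ℝ → ℝ) (hlip : LocallyLipschitz α) (hα0 : α 0 = 0) (hmono : StrictMono α)
    (h : EuclideanSpace ℝ (Fin n) → EuclideanSpace ℝ (Fin n) → ℝ)
    (hh : ContDiff ℝ 1 (fun q : EuclideanSpace ℝ (Fin n) × EuclideanSpace ℝ (Fin n) =>
      h q.1 q.2))
    (ξi ξj ξi' ξj' : ℝ → EuclideanSpace ℝ (Fin n))
    (hξi : ∀ t, HasDerivAt ξi (ξi' t) t) (hξi' : Continuous ξi')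
    (hξj : ∀ t, HasDerivAt ξj (ξj' t) t) (hξj' : Continuous ξj')
    (γij γji : ℝ → ℝ) (hγij : Continuous γij) (hγji : Continuous γji)
    (hcons1 : ∀ t ≥ (0:ℝ),
      ⟪gradient (fun a => h a (ξj t)) (ξi t), ξi' t⟫ ≥ -γij t * α (h (ξi t) (ξj t)))
    (hcons2 : ∀ t ≥ (0:ℝ),
      ⟪gradient (fun b => h (ξi t) b) (ξj t), ξj' t⟫ ≥ -γji t * α (h (ξi t) (ξj t)))
    (h0 : h (ξi 0) (ξj 0) ≥ 0) :
    ∀ t ≥ (0:ℝ), h (ξi t) (ξj t) ≥ 0 := by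
  classical
  set F : EuclideanSpace ℝ (Fin n) × EuclideanSpace ℝ (Fin n) → ℝ := fun q => h q.1 q.2 with hFdef
  have hFd : Differentiable ℝ F := hh.differentiable one_ne_zero
  set H : ℝ → ℝ := fun t => h (ξi t) (ξj t) with hHdef
  -- partial gradients represent partial Fréchet derivatives
  have hpart1 : ∀ (x b : EuclideanSpace ℝ (Fin n)) (v : EuclideanSpace ℝ (Fin n)),
      ⟪gradient (fun a => h a b) x, v⟫ = fderiv ℝ F (x, b) (v, 0) := by
    intro x b v
    have hincl : HasFDerivAt (fun a : EuclideanSpace ℝ (Fin n) => (a, b)) (ContinuousLinearMap.inl ℝ (EuclideanSpace ℝ (Fin n)) (EuclideanSpace ℝ (Fin n))) x :=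
      hasFDerivAt_prodMk_left x b
    have h1 : HasFDerivAt (fun a => h a b)
        ((fderiv ℝ F (x, b)).comp (ContinuousLinearMap.inl ℝ (EuclideanSpace ℝ (Fin n)) (EuclideanSpace ℝ (Fin n)))) x :=
      by have := (hFd (x, b)).hasFDerivAt.comp x hincl; exact this
    have hg : HasGradientAt (fun a => h a b) (gradient (fun a => h a b) x) x :=
      h1.differentiableAt.hasGradientAt
    have hg' := hasGradientAt_iff_hasFDerivAt.mp hg
    have heq := h1.unique hg'
    have hv := congrFun (congrArg DFunLike.coe heq) v
    rw [InnerProductSpace.toDual_apply_apply] at hv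
    exact hv.symm
  have hpart2 : ∀ (x b : EuclideanSpace ℝ (Fin n)) (w : EuclideanSpace ℝ (Fin n)),
      ⟪gradient (fun y => h x y) b, w⟫ = fderiv ℝ F (x, b) (0, w) := by
    intro x b w
    have hincl : HasFDerivAt (fun y : EuclideanSpace ℝ (Fin n) => (x, y)) (ContinuousLinearMap.inr ℝ (EuclideanSpace ℝ (Fin n)) (EuclideanSpace ℝ (Fin n))) b :=
      hasFDerivAt_prodMk_right x b
    have h1 : HasFDerivAt (fun y => h x y)
        ((fderiv ℝ F (x, b)).comp (ContinuousLinearMap.inr ℝ (EuclideanSpace ℝ (Fin n)) (EuclideanSpace ℝ (Fin n)))) b :=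
      by have := (hFd (x, b)).hasFDerivAt.comp b hincl; exact this
    have hg : HasGradientAt (fun y => h x y) (gradient (fun y => h x y) b) b :=
      h1.differentiableAt.hasGradientAt
    have hg' := hasGradientAt_iff_hasFDerivAt.mp hg
    have heq := h1.unique hg'
    have hw := congrFun (congrArg DFunLike.coe heq) w
    rw [InnerProductSpace.toDual_apply_apply] at hw
    exact hw.symm
  -- derivative of H
  set D : ℝ → ℝ := fun t =>
    ⟪gradient (fun a => h a (ξj t)) (ξi t), ξi' t⟫ +
      ⟪gradient (fun b => h (ξi t) b) (ξj t), ξj' t⟫ with hDdef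
  have hHD : ∀ t, HasDerivAt H (D t) t := by
    intro t
    have hΦ : HasDerivAt (fun s => (ξi s, ξj s)) (ξi' t, ξj' t) t := (hξi t).prodMk (hξj t)
    have hH1 : HasDerivAt H (fderiv ℝ F (ξi t, ξj t) (ξi' t, ξj' t)) t :=
      by have := (hFd (ξi t, ξj t)).hasFDerivAt.comp_hasDerivAt t hΦ; exact this
    have hsplit : fderiv ℝ F (ξi t, ξj t) (ξi' t, ξj' t) = D t := by
      have : (ξi' t, ξj' t) = ((ξi' t, (0 : EuclideanSpace ℝ (Fin n))) + ((0 : EuclideanSpace ℝ (Fin n)), ξj' t)) := by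
        simp [Prod.ext_iff]
      rw [this, map_add, ← hpart1 (ξi t) (ξj t) (ξi' t), ← hpart2 (ξi t) (ξj t) (ξj' t)]
    rwa [hsplit] at hH1
  have hcont : Continuous H := by
    rw [continuous_iff_continuousAt]; exact fun t => (hHD t).continuousAt
  -- main argument, by contradiction
  intro t₀ ht₀
  by_contra hneg
  push_neg at hneg
  have ht₀0 : t₀ ≠ 0 := by
    intro hrw; rw [hrw] at hneg; exact absurd h0 (not_le.mpr hneg)
  have ht₀pos : 0 < t₀ := lt_of_le_of_ne ht₀ (Ne.symm ht₀0)
  set S : Set ℝ := {t | t ∈ Set.Icc 0 t₀ ∧ 0 ≤ H t} with hSdef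
  have hSne : S.Nonempty := ⟨0, ⟨Set.left_mem_Icc.mpr (le_of_lt ht₀pos), h0⟩⟩
  have hSbdd : BddAbove S := ⟨t₀, fun t ht => ht.1.2⟩
  have hSclosed : IsClosed S := by
    have : S = Set.Icc 0 t₀ ∩ H ⁻¹' Set.Ici 0 := by
      ext t; simp [hSdef, Set.mem_Icc, and_assoc]
    rw [this]
    exact isClosed_Icc.inter (isClosed_Ici.preimage hcont)
  set s := sSup S with hsdef
  have hsS : s ∈ S := hSclosed.csSup_mem hSne hSbdd
  have hs0 : 0 ≤ s := hsS.1.1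
  have hst₀ : s ≤ t₀ := hsS.1.2
  have hHneg : ∀ t, s < t → t ≤ t₀ → H t < 0 := by
    intro t hst htt₀
    by_contra hge
    push_neg at hge
    have : t ∈ S := ⟨⟨le_trans hs0 (le_of_lt hst), htt₀⟩, hge⟩
    exact absurd (le_csSup hSbdd this) (not_le.mpr hst)
  have hst₀' : s < t₀ := by
    rcases lt_or_eq_of_le hst₀ with hlt | heq
    · exact hlt
    · exact absurd hsS.2 (not_le.mpr (heq ▸ hneg))
  have hHs : H s = 0 := by
    refine le_antisymm ?_ hsS.2
    have htend : Tendsto H (𝓝[>] s) (𝓝 (H s)) :=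
      (hcont.tendsto s).mono_left nhdsWithin_le_nhds
    have hev : ∀ᶠ t in 𝓝[>] s, H t ≤ 0 := by
      filter_upwards [Ioo_mem_nhdsGT_of_mem (Set.left_mem_Ico.mpr hst₀')] with t ht
      exact le_of_lt (hHneg t ht.1 (le_of_lt ht.2))
    exact le_of_tendsto htend hev
  -- local Lipschitz data around 0
  obtain ⟨L, U, hU, hLip⟩ := hlip 0
  obtain ⟨r, hr, hball⟩ := Metric.mem_nhds_iff.mp hU
  have h0U : (0 : ℝ) ∈ U := mem_of_mem_nhds hU
  -- continuity of H at s
  obtain ⟨δ, hδ, hδball⟩ := Metric.continuousAt_iff.mp (hcont.continuousAt (x := s)) r hr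
  set t₁ := min t₀ (s + δ / 2) with ht₁def
  have hst₁ : s < t₁ := lt_min hst₀' (by linarith)
  have ht₁t₀ : t₁ ≤ t₀ := min_le_left _ _
  have hHU : ∀ t ∈ Set.Icc s t₁, H t ∈ U := by
    intro t ht
    apply hball
    have h1 : dist t s < δ := by
      rw [Real.dist_eq, abs_of_nonneg (by linarith [ht.1])]
      have := ht.2
      have h2 : t₁ ≤ s + δ / 2 := min_le_right _ _
      linarith
    have := hδball h1
    rw [hHs] at this
    simpa [Metric.mem_ball] using this
  have hHle : ∀ t ∈ Set.Icc s t₁, H t ≤ 0 := by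
    intro t ht
    rcases eq_or_lt_of_le ht.1 with heq | hlt
    · rw [← heq, hHs]
    · exact le_of_lt (hHneg t hlt (le_trans ht.2 ht₁t₀))
  -- bound for γ on the compact interval
  obtain ⟨C', hC'⟩ := (isCompact_Icc (a := s) (b := t₁)).exists_bound_of_continuousOn
    ((hγij.abs.add hγji.abs).continuousOn)
  set C := max C' 0 with hCdef
  have hC : ∀ t ∈ Set.Icc s t₁, |γij t| + |γji t| ≤ C := by
    intro t ht
    calc |γij t| + |γji t| ≤ |(|γij t| + |γji t|)| := le_abs_self _
      _ ≤ C' := hC' t ht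
      _ ≤ C := le_max_left _ _
  have hC0 : 0 ≤ C := le_max_right _ _
  -- Grönwall
  set f : ℝ → ℝ := fun t => -H t with hfdef
  have hαbound : ∀ t ∈ Set.Icc s t₁, |α (H t)| ≤ (L : ℝ) * (-H t) := by
    intro t ht
    have h1 := hLip.dist_le_mul (H t) (hHU t ht) 0 h0U
    rw [hα0] at h1
    rw [Real.dist_eq, Real.dist_eq, sub_zero, sub_zero] at h1
    calc |α (H t)| ≤ (L : ℝ) * |H t| := h1
      _ = (L : ℝ) * (-H t) := by rw [abs_of_nonpos (hHle t ht)]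
  have key : ∀ x ∈ Set.Icc s t₁, f x ≤ gronwallBound 0 (C * L) 0 (x - s) := by
    apply le_gronwallBound_of_liminf_deriv_right_le (f' := fun t => -(D t))
    · exact (hcont.neg).continuousOn
    · intro x hx red hred
      exact ((hHD x).neg.hasDerivWithinAt (s := Set.Ici x)).liminf_right_slope_le hred
    · simp [hfdef, hHs]
    · intro x hx
      have hx' : x ∈ Set.Icc s t₁ := ⟨hx.1, le_of_lt hx.2⟩
      have hx0 : (0 : ℝ) ≤ x := le_trans hs0 hx.1
      have hd1 := hcons1 x hx0
      have hd2 := hcons2 x hx0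
      have hD : D x ≥ -γij x * α (H x) + -γji x * α (H x) := add_le_add hd1 hd2
      have hfx : 0 ≤ f x := by simpa [hfdef] using hHle x hx'
      have habs := hαbound x hx'
      have hterm : γij x * α (H x) + γji x * α (H x) ≤ (|γij x| + |γji x|) * ((L : ℝ) * f x) := by
        have h1 : γij x * α (H x) ≤ |γij x| * ((L : ℝ) * f x) := by
          calc γij x * α (H x) ≤ |γij x * α (H x)| := le_abs_self _
            _ = |γij x| * |α (H x)| := abs_mul _ _
            _ ≤ |γij x| * ((L : ℝ) * f x) := by
                apply mul_le_mul_of_nonneg_left _ (abs_nonneg _)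
                simpa [hfdef] using habs
        have h2 : γji x * α (H x) ≤ |γji x| * ((L : ℝ) * f x) := by
          calc γji x * α (H x) ≤ |γji x * α (H x)| := le_abs_self _
            _ = |γji x| * |α (H x)| := abs_mul _ _
            _ ≤ |γji x| * ((L : ℝ) * f x) := by
                apply mul_le_mul_of_nonneg_left _ (abs_nonneg _)
                simpa [hfdef] using habs
        calc γij x * α (H x) + γji x * α (H x)
            ≤ |γij x| * ((L : ℝ) * f x) + |γji x| * ((L : ℝ) * f x) := add_le_add h1 h2
          _ = (|γij x| + |γji x|) * ((L : ℝ) * f x) := by ring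
      have hCL : (|γij x| + |γji x|) * ((L : ℝ) * f x) ≤ C * (L : ℝ) * f x := by
        calc (|γij x| + |γji x|) * ((L : ℝ) * f x)
            ≤ C * ((L : ℝ) * f x) :=
              mul_le_mul_of_nonneg_right (hC x hx') (mul_nonneg (by positivity) hfx)
          _ = C * (L : ℝ) * f x := by ring
      calc -(D x) ≤ γij x * α (H x) + γji x * α (H x) := by
            have := hD; simp only [neg_mul] at this; linarith
        _ ≤ C * (L : ℝ) * f x := le_trans hterm hCL
        _ ≤ C * (L : ℝ) * f x + 0 := by linarith
  have hft₁ := key t₁ ⟨le_of_lt hst₁, le_refl _⟩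
  rw [gronwallBound_ε0, zero_mul] at hft₁
  have : H t₁ < 0 := hHneg t₁ hst₁ ht₁t₀
  simp only [hfdef] at hft₁
  linarith
end

section
/- Let θ ∈ ℝ and set o = (cos θ, sin θ), o⊥ = (sin θ, −cos θ). Let H be a symmetric real 2×2 matrix with ⟨o, H o⟩ ≠ 0, let R = [[0, 1], [−1, 0]] and Q = R H R. Let k₁, k₂ ∈ ℝ, d* ∈ ℝ with d* ≠ 0, and ẽ, w ∈ ℝ². Define v = k₁ ⟨ẽ, H o⟩ + ⟨o, w⟩ / ⟨o, H o⟩ and ω = −(k₂/d*) ⟨ẽ, o⊥⟩ + (1/d*) ⟨o⊥, Q w⟩ / ⟨o, H o⟩. Then w − v·(H o) + d*·ω·o⊥ = −k₁ ⟨ẽ, H o⟩ · (H o) − k₂ ⟨ẽ, o⊥⟩ · o⊥. -/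
set_option maxHeartbeats 1000000


open Real Matrix

/-- Algebraic core of Theorem 3: with `o = (cos θ, sin θ)`,
`o⊥ = (sin θ, −cos θ)`, `H` a symmetric `2×2` matrix with `⟨o, H o⟩ ≠ 0`,
`R = [[0, 1], [−1, 0]]`, `Q = R H R`, `d* ≠ 0`, and the orientation-constrained
flocking controller
`v = k₁ ⟨ẽ, H o⟩ + ⟨o, w⟩/⟨o, H o⟩`,
`ω = −(k₂/d*) ⟨ẽ, o⊥⟩ + (1/d*) ⟨o⊥, Q w⟩/⟨o, H o⟩`,
one has `w − v·(H o) + d*·ω·o⊥ = −k₁ ⟨ẽ, H o⟩ (H o) − k₂ ⟨ẽ, o⊥⟩ o⊥`. -/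
theorem stmt_12 (θ k1 k2 dstar : ℝ) (hdstar : dstar ≠ 0)
    (H : Matrix (Fin 2) (Fin 2) ℝ) (hH : H.IsSymm)
    (hHo : ![cos θ, sin θ] ⬝ᵥ H.mulVec ![cos θ, sin θ] ≠ 0)
    (etil w : Fin 2 → ℝ) (v ω : ℝ)
    (hv : v = k1 * (etil ⬝ᵥ H.mulVec ![cos θ, sin θ])
        + (![cos θ, sin θ] ⬝ᵥ w) / (![cos θ, sin θ] ⬝ᵥ H.mulVec ![cos θ, sin θ]))
    (hω : ω = -(k2 / dstar) * (etil ⬝ᵥ ![sin θ, -cos θ])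
        + (1 / dstar) *
            (![sin θ, -cos θ] ⬝ᵥ
              ((!![0, 1; -1, 0] : Matrix (Fin 2) (Fin 2) ℝ) * H *
                (!![0, 1; -1, 0] : Matrix (Fin 2) (Fin 2) ℝ)).mulVec w) /
            (![cos θ, sin θ] ⬝ᵥ H.mulVec ![cos θ, sin θ])) :
    w - v • H.mulVec ![cos θ, sin θ] + (dstar * ω) • ![sin θ, -cos θ] =
      -(k1 * (etil ⬝ᵥ H.mulVec ![cos θ, sin θ])) • H.mulVec ![cos θ, sin θ]
        - (k2 * (etil ⬝ᵥ ![sin θ, -cos θ])) • ![sin θ, -cos θ] := by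
  rw [show ((!![0, 1; -1, 0] : Matrix (Fin 2) (Fin 2) ℝ) * H *
      (!![0, 1; -1, 0] : Matrix (Fin 2) (Fin 2) ℝ)).mulVec w =
      (!![0, 1; -1, 0] : Matrix (Fin 2) (Fin 2) ℝ).mulVec
        (H.mulVec ((!![0, 1; -1, 0] : Matrix (Fin 2) (Fin 2) ℝ).mulVec w))
    from by rw [Matrix.mulVec_mulVec, Matrix.mulVec_mulVec]] at hω
  obtain ⟨a, b, c, d, rfl⟩ : ∃ a b c d, H = !![a, b; c, d] :=
    ⟨_, _, _, _, (Matrix.etaExpand_eq H).symm⟩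
  have hsym : c = b := by
    have := congrFun (congrFun hH.eq 0) 1
    simpa [Matrix.transpose_apply] using this
  subst hsym
  have hpy : sin θ ^ 2 = 1 - cos θ ^ 2 := by
    have := sin_sq_add_cos_sq θ; nlinarith
  subst hv hω
  funext i
  fin_cases i <;>
  · simp only [Matrix.mulVec, dotProduct, Fin.sum_univ_two,
      Matrix.cons_val_zero, Matrix.cons_val_one, Matrix.head_cons,
      Matrix.mul_apply, Matrix.cons_mul, Matrix.of_apply, Pi.add_apply,
      Pi.sub_apply, Pi.smul_apply, Pi.neg_apply, smul_eq_mul,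
      Matrix.cons_val', Matrix.empty_val', Matrix.cons_val_fin_one,
      Matrix.head_fin_const, Fin.zero_eta, Fin.mk_one] at hHo ⊢
    have h1 : cos θ * (a * cos θ + c * sin θ) + sin θ * (cos θ * c + sin θ * d) ≠ 0 := by
      intro h; apply hHo; linear_combination h
    field_simp
    ring
end

section
/- Let J : ℝ² → ℝ be twice continuously differentiable, k₁, k₂ ≥ 0, d* > 0. Fix an agent i with finite nonempty neighbor index set N'_i of cardinality N'. For each j ∈ N'_i let p_j : [0,∞) → ℝ² be differentiable with ṗ_j(t) = v_j(t) o(θ_j(t)), and let (x_i, y_i, θ_i) be a unicycle trajectory with position p_i = (x_i, y_i). Let H_i(t) = ∇²J(p_i(t)), assume ⟨o(θ_i(t)), H_i(t) o(θ_i(t))⟩ ≠ 0 for all t, let R = [[0,1],[−1,0]] and Q_i = R H_i R, and define the error vector ẽ_i(t) = (1/N′) Σ_{j∈N'_i} ∇J(p_j(t)) − ∇J(p_i(t)) − d*·o(θ_i(t)). If the control inputs are v_i = k₁ ⟨ẽ_i, H_i o(θ_i)⟩ + (1/N′) Σ_{k∈N'_i} v_k ⟨o(θ_i), ∇²J(p_k)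 o(θ_k)⟩ / ⟨o(θ_i), H_i o(θ_i)⟩ and ω_i = −(k₂/d*) ⟨ẽ_i, o⊥(θ_i)⟩ + (1/N′) Σ_{k∈N'_i} (v_k/d*) ⟨o⊥(θ_i), Q_i ∇²J(p_k) o(θ_k)⟩ / ⟨o(θ_i), H_i o(θ_i)⟩, then for all t ≥ 0, (d/dt) (½ ‖ẽ_i(t)‖²) = −k₁ ⟨ẽ_i(t), H_i(t) o(θ_i(t))⟩² − k₂ ⟨ẽ_i(t), o⊥(θ_i(t))⟩² ≤ 0; in particular t ↦ ‖ẽ_i(t)‖ is nonincreasing. -/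
open Real Filter
open scoped RealInnerProductSpace

/-- The rotation matrix `R = [[0, 1], [−1, 0]]` acting on `ℝ²`: `R u = (u₂, −u₁)`. -/
noncomputable def rotR (u : EuclideanSpace ℝ (Fin 2)) : EuclideanSpace ℝ (Fin 2) :=
  vec2 (u 1) (-(u 0))

@[simp] lemma vec2_apply0 (a b : ℝ) : vec2 a b 0 = a := rfl
@[simp] lemma vec2_apply1 (a b : ℝ) : vec2 a b 1 = b := rfl

lemma inner_eq (x y : EuclideanSpace ℝ (Fin 2)) : ⟪x, y⟫ = x 0 * y 0 + x 1 * y 1 := by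
  simp [PiLp.inner_apply, Fin.sum_univ_two, RCLike.inner_apply, mul_comm]

lemma vec2_eta (x : EuclideanSpace ℝ (Fin 2)) : vec2 (x 0) (x 1) = x := by
  ext i; fin_cases i <;> rfl

lemma vec2_smul (c a b : ℝ) : c • vec2 a b = vec2 (c*a) (c*b) := by
  ext i; fin_cases i <;> simp [vec2]

lemma clm_apply (T : EuclideanSpace ℝ (Fin 2) →L[ℝ] EuclideanSpace ℝ (Fin 2))
    (u : EuclideanSpace ℝ (Fin 2)) :
    T u = vec2 (u 0 * T (vec2 1 0) 0 + u 1 * T (vec2 0 1) 0)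
               (u 0 * T (vec2 1 0) 1 + u 1 * T (vec2 0 1) 1) := by
  have hu : u = u 0 • vec2 1 0 + u 1 • vec2 0 1 := by
    ext i; fin_cases i <;> simp [vec2]
  rw [hu]; rw [map_add, map_smul, map_smul]
  ext i; fin_cases i <;> simp [vec2]

lemma key_identity (T : EuclideanSpace ℝ (Fin 2) →L[ℝ] EuclideanSpace ℝ (Fin 2))
    (hsym : ⟪vec2 1 0, T (vec2 0 1)⟫ = ⟪vec2 0 1, T (vec2 1 0)⟫)
    (a b : ℝ) (e u : EuclideanSpace ℝ (Fin 2)) :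
    ⟪vec2 a b, T (vec2 a b)⟫ * ⟪e, u⟫ =
      ⟪vec2 a b, u⟫ * ⟪e, T (vec2 a b)⟫
      - ⟪vec2 b (-a), rotR (T (rotR u))⟫ * ⟪e, vec2 b (-a)⟫ := by
  have hs : T (vec2 0 1) 0 = T (vec2 1 0) 1 := by simpa [inner_eq] using hsym
  rw [clm_apply T (vec2 a b), clm_apply T (rotR u)]
  simp only [inner_eq, rotR, vec2_apply0, vec2_apply1]
  rw [hs]
  ring

lemma grad_def (J : EuclideanSpace ℝ (Fin 2) → ℝ) :
    gradient J = fun x => (InnerProductSpace.toDual ℝ _).symm (fderiv ℝ J x) := by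
  funext x; rfl

lemma contDiff_gradient {J : EuclideanSpace ℝ (Fin 2) → ℝ} (hJ : ContDiff ℝ 2 J) :
    ContDiff ℝ 1 (gradient J) := by
  rw [grad_def]
  exact (InnerProductSpace.toDual ℝ _).symm.contDiff.comp (hJ.fderiv_right (by norm_num))

lemma fderiv_eq_innerSL_gradient (J : EuclideanSpace ℝ (Fin 2) → ℝ) :
    fderiv ℝ J = fun z => (innerSL ℝ) (gradient J z) := by
  funext z
  ext y
  simp [grad_def, InnerProductSpace.toDual_symm_apply]

lemma hess_symm {J : EuclideanSpace ℝ (Fin 2) → ℝ} (hJ : ContDiff ℝ 2 J)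
    (x u w : EuclideanSpace ℝ (Fin 2)) :
    ⟪u, hess J x w⟫ = ⟪w, hess J x u⟫ := by
  have hsnd := (hJ.contDiffAt (x := x)).isSymmSndFDerivAt (by norm_num)
  have hkey : ∀ v y : EuclideanSpace ℝ (Fin 2),
      fderiv ℝ (fderiv ℝ J) x y v = ⟪v, hess J x y⟫ := by
    intro v y
    have h1 : HasFDerivAt (fderiv ℝ J) ((innerSL ℝ).comp (hess J x)) x := by
      rw [fderiv_eq_innerSL_gradient]
      exact (innerSL ℝ).hasFDerivAt.comp x (hasFDerivAt_gradient hJ x)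
    rw [h1.fderiv]
    simp only [ContinuousLinearMap.coe_comp', Function.comp_apply, innerSL_apply_apply]
    exact real_inner_comm _ _
  rw [← hkey u w, ← hkey w u]
  exact hsnd w u

lemma algebra_step {ιf : Type} [Fintype ιf] (vt eU A B : ιf → ℝ)
    (N X Y c k1 k2 dstar vit ωit : ℝ) (hc0 : c ≠ 0) (hd0 : dstar ≠ 0)
    (hkey : ∀ k, c * eU k = A k * X - B k * Y)
    (hvit : vit = k1 * X + N⁻¹ * ∑ k, vt k * A k / c)
    (hωit : ωit = -(k2 / dstar) * Y + N⁻¹ * ∑ k, (vt k / dstar) * B k / c) :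
    N⁻¹ * (∑ k, vt k * eU k) - vit * X + dstar * ωit * Y = -k1 * X ^ 2 - k2 * Y ^ 2 := by
  subst hvit hωit
  have h1 : ∀ k, vt k * eU k = vt k * A k / c * X - vt k * B k / c * Y := by
    intro k
    rw [div_mul_eq_mul_div, div_mul_eq_mul_div, div_sub_div_same, eq_div_iff hc0]
    linear_combination vt k * hkey k
  rw [Finset.sum_congr rfl (fun k _ => h1 k), Finset.sum_sub_distrib,
    ← Finset.sum_mul, ← Finset.sum_mul]
  have h2 : ∑ k, vt k / dstar * B k / c = (∑ k, vt k * B k / c) / dstar := by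
    rw [Finset.sum_div]
    exact Finset.sum_congr rfl fun k _ => by ring
  rw [h2]
  set SA := ∑ k, vt k * A k / c with hSA
  set SB := ∑ k, vt k * B k / c with hSB
  field_simp
  linear_combination (0 : ℝ) * (mul_inv_cancel₀ hd0)

/-- Lyapunov dissipation of Theorem 3: with a `C²` field `J`,
`k₁, k₂ ≥ 0`, `d* > 0`, neighbors moving with `ṗ_j = v_j o(θ_j)`, agent `i` a unicycle at
`p_i = (x_i, y_i)` with Hessian `H_i = ∇²J(p_i)` satisfying `⟨o(θ_i), H_i o(θ_i)⟩ ≠ 0`,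
`Q_i = R H_i R`, error vector `ẽ_i = (1/N′)Σ_j ∇J(p_j) − ∇J(p_i) − d* o(θ_i)`, and the
orientation-constrained distributed flocking controller, one has for all `t ≥ 0`
`(d/dt)(½‖ẽ_i‖²) = −k₁ ⟨ẽ_i, H_i o(θ_i)⟩² − k₂ ⟨ẽ_i, o⊥(θ_i)⟩² ≤ 0`; in particular
`t ↦ ‖ẽ_i(t)‖` is nonincreasing on `[0,∞)`. -/
theorem stmt_13
    (J : EuclideanSpace ℝ (Fin 2) → ℝ) (hJ : ContDiff ℝ 2 J)
    (k1 k2 dstar : ℝ) (hk1 : 0 ≤ k1) (hk2 : 0 ≤ k2) (hdstar : 0 < dstar)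
    (ι : Type) [Fintype ι] [Nonempty ι]
    (p : ι → ℝ → EuclideanSpace ℝ (Fin 2)) (v : ι → ℝ → ℝ) (θ : ι → ℝ → ℝ)
    (hp : ∀ j, ∀ t ≥ (0:ℝ),
      HasDerivAt (p j) (v j t • vec2 (cos (θ j t)) (sin (θ j t))) t)
    (xi yi θi vi ωi : ℝ → ℝ)
    (hxi : ∀ t ≥ (0:ℝ), HasDerivAt xi (vi t * cos (θi t)) t)
    (hyi : ∀ t ≥ (0:ℝ), HasDerivAt yi (vi t * sin (θi t)) t)
    (hθi : ∀ t ≥ (0:ℝ), HasDerivAt θi (ωi t) t)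
    (pi : ℝ → EuclideanSpace ℝ (Fin 2)) (hpi : ∀ t, pi t = vec2 (xi t) (yi t))
    (hHo : ∀ t, ⟪vec2 (cos (θi t)) (sin (θi t)),
      hess J (pi t) (vec2 (cos (θi t)) (sin (θi t)))⟫ ≠ 0)
    (etil : ℝ → EuclideanSpace ℝ (Fin 2))
    (hetil : ∀ t, etil t =
      ((Fintype.card ι : ℝ))⁻¹ • (∑ j, gradient J (p j t)) - gradient J (pi t)
        - dstar • vec2 (cos (θi t)) (sin (θi t)))
    (hvi : ∀ t ≥ (0:ℝ), vi t =
      k1 * ⟪etil t, hess J (pi t) (vec2 (cos (θi t)) (sin (θi t)))⟫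
      + ((Fintype.card ι : ℝ))⁻¹ * ∑ k, v k t *
          ⟪vec2 (cos (θi t)) (sin (θi t)),
            hess J (p k t) (vec2 (cos (θ k t)) (sin (θ k t)))⟫ /
          ⟪vec2 (cos (θi t)) (sin (θi t)),
            hess J (pi t) (vec2 (cos (θi t)) (sin (θi t)))⟫)
    (hωi : ∀ t ≥ (0:ℝ), ωi t =
      -(k2 / dstar) * ⟪etil t, vec2 (sin (θi t)) (-cos (θi t))⟫
      + ((Fintype.card ι : ℝ))⁻¹ * ∑ k, (v k t / dstar) *
          ⟪vec2 (sin (θi t)) (-cos (θi t)),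
            rotR (hess J (pi t) (rotR (hess J (p k t)
              (vec2 (cos (θ k t)) (sin (θ k t))))))⟫ /
          ⟪vec2 (cos (θi t)) (sin (θi t)),
            hess J (pi t) (vec2 (cos (θi t)) (sin (θi t)))⟫) :
    (∀ t ≥ (0:ℝ),
      HasDerivAt (fun s => (1 / 2) * ‖etil s‖ ^ 2)
        (-k1 * ⟪etil t, hess J (pi t) (vec2 (cos (θi t)) (sin (θi t)))⟫ ^ 2
          - k2 * ⟪etil t, vec2 (sin (θi t)) (-cos (θi t))⟫ ^ 2) t ∧
      -k1 * ⟪etil t, hess J (pi t) (vec2 (cos (θi t)) (sin (θi t)))⟫ ^ 2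
          - k2 * ⟪etil t, vec2 (sin (θi t)) (-cos (θi t))⟫ ^ 2 ≤ 0) ∧
    AntitoneOn (fun t => ‖etil t‖) (Set.Ici 0) := by
  have hmain : ∀ t ≥ (0:ℝ),
      HasDerivAt (fun s => (1 / 2) * ‖etil s‖ ^ 2)
        (-k1 * ⟪etil t, hess J (pi t) (vec2 (cos (θi t)) (sin (θi t)))⟫ ^ 2
          - k2 * ⟪etil t, vec2 (sin (θi t)) (-cos (θi t))⟫ ^ 2) t := by
    intro t ht
    have hc0 : ⟪vec2 (cos (θi t)) (sin (θi t)),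
        hess J (pi t) (vec2 (cos (θi t)) (sin (θi t)))⟫ ≠ 0 := hHo t
    -- derivative of pi
    have hpi' : HasDerivAt pi (vi t • vec2 (cos (θi t)) (sin (θi t))) t := by
      have h1 : HasDerivAt (fun s => vec2 (xi s) (yi s))
          (vec2 (vi t * cos (θi t)) (vi t * sin (θi t))) t :=
        hasDerivAt_vec2 (hxi t ht) (hyi t ht)
      have h2 : pi = fun s => vec2 (xi s) (yi s) := funext hpi
      rw [h2, vec2_smul]
      exact h1
    -- derivative of gradient along pi
    have hgi : HasDerivAt (fun s => gradient J (pi s))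
        (vi t • hess J (pi t) (vec2 (cos (θi t)) (sin (θi t)))) t := by
      have := (hasFDerivAt_gradient hJ (pi t)).comp_hasDerivAt t hpi'
      simpa [Function.comp_def] using this
    -- derivative of gradient along p j
    have hgj : ∀ j : ι, HasDerivAt (fun s => gradient J (p j s))
        (v j t • hess J (p j t) (vec2 (cos (θ j t)) (sin (θ j t)))) t := by
      intro j
      have := (hasFDerivAt_gradient hJ (p j t)).comp_hasDerivAt t (hp j t ht)
      simpa [Function.comp_def] using this
    -- derivative of dstar • o(θi)
    have hoi : HasDerivAt (fun s => dstar • vec2 (cos (θi s)) (sin (θi s)))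
        ((dstar * (- ωi t)) • vec2 (sin (θi t)) (-cos (θi t))) t := by
      have h1 : HasDerivAt (fun s => cos (θi s)) (-sin (θi t) * ωi t) t := (hθi t ht).cos
      have h2 : HasDerivAt (fun s => sin (θi s)) (cos (θi t) * ωi t) t := (hθi t ht).sin
      have h3 := (hasDerivAt_vec2 h1 h2).const_smul dstar
      have h4 : dstar • vec2 (-sin (θi t) * ωi t) (cos (θi t) * ωi t)
          = (dstar * (- ωi t)) • vec2 (sin (θi t)) (-cos (θi t)) := by
        rw [vec2_smul, vec2_smul]
        congr 1 <;> ring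
      rw [← h4]
      exact h3
    -- derivative of etil
    have hetil' : HasDerivAt etil
        (((Fintype.card ι : ℝ))⁻¹ • (∑ j, v j t • hess J (p j t) (vec2 (cos (θ j t)) (sin (θ j t))))
          - vi t • hess J (pi t) (vec2 (cos (θi t)) (sin (θi t)))
          - (dstar * (- ωi t)) • vec2 (sin (θi t)) (-cos (θi t))) t := by
      have h2 : etil = fun s => ((Fintype.card ι : ℝ))⁻¹ • (∑ j, gradient J (p j s))
          - gradient J (pi s) - dstar • vec2 (cos (θi s)) (sin (θi s)) := funext hetil
      rw [h2]
      exact (((HasDerivAt.fun_sum (fun j _ => hgj j)).const_smul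
        ((Fintype.card ι : ℝ))⁻¹).sub hgi).sub hoi
    -- the derivative of etil, as a vector
    set E' : EuclideanSpace ℝ (Fin 2) :=
      ((Fintype.card ι : ℝ))⁻¹ • (∑ j, v j t • hess J (p j t) (vec2 (cos (θ j t)) (sin (θ j t))))
        - vi t • hess J (pi t) (vec2 (cos (θi t)) (sin (θi t)))
        - (dstar * (- ωi t)) • vec2 (sin (θi t)) (-cos (θi t)) with hE'
    -- derivative of the half-norm-squared
    have hd : HasDerivAt (fun s => (1 / 2) * ‖etil s‖ ^ 2) ⟪etil t, E'⟫ t := by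
      have h1 : (fun s => (1 / 2 : ℝ) * ‖etil s‖ ^ 2)
          = fun s => (1 / 2 : ℝ) * ⟪etil s, etil s⟫ := by
        funext s; rw [real_inner_self_eq_norm_sq]
      rw [h1]
      have h2 := (hetil'.inner ℝ hetil').const_mul (1/2 : ℝ)
      have h3 : (1/2 : ℝ) * (⟪etil t, E'⟫ + ⟪E', etil t⟫) = ⟪etil t, E'⟫ := by
        rw [real_inner_comm E' (etil t)]; ring
      rw [← h3]
      exact h2
    -- expand the inner product against E'
    have hS : ⟪etil t, E'⟫ =
        ((Fintype.card ι : ℝ))⁻¹ * (∑ k, v k t *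
            ⟪etil t, hess J (p k t) (vec2 (cos (θ k t)) (sin (θ k t)))⟫)
          - vi t * ⟪etil t, hess J (pi t) (vec2 (cos (θi t)) (sin (θi t)))⟫
          + dstar * ωi t * ⟪etil t, vec2 (sin (θi t)) (-cos (θi t))⟫ := by
      rw [hE', inner_sub_right, inner_sub_right, inner_smul_right, inner_smul_right,
        inner_smul_right, inner_sum]
      simp only [inner_smul_right]
      ring
    -- the key pointwise identity
    have hsym : ⟪vec2 1 0, hess J (pi t) (vec2 0 1)⟫
        = ⟪vec2 0 1, hess J (pi t) (vec2 1 0)⟫ := hess_symm hJ (pi t) _ _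
    have hkey : ∀ k : ι,
        ⟪vec2 (cos (θi t)) (sin (θi t)),
          hess J (pi t) (vec2 (cos (θi t)) (sin (θi t)))⟫ *
          ⟪etil t, hess J (p k t) (vec2 (cos (θ k t)) (sin (θ k t)))⟫ =
        ⟪vec2 (cos (θi t)) (sin (θi t)),
            hess J (p k t) (vec2 (cos (θ k t)) (sin (θ k t)))⟫ *
          ⟪etil t, hess J (pi t) (vec2 (cos (θi t)) (sin (θi t)))⟫
        - ⟪vec2 (sin (θi t)) (-cos (θi t)),
            rotR (hess J (pi t) (rotR (hess J (p k t)
              (vec2 (cos (θ k t)) (sin (θ k t))))))⟫ *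
          ⟪etil t, vec2 (sin (θi t)) (-cos (θi t))⟫ := fun k =>
      key_identity (hess J (pi t)) hsym (cos (θi t)) (sin (θi t)) (etil t)
        (hess J (p k t) (vec2 (cos (θ k t)) (sin (θ k t))))
    have hval : ⟪etil t, E'⟫ =
        -k1 * ⟪etil t, hess J (pi t) (vec2 (cos (θi t)) (sin (θi t)))⟫ ^ 2
          - k2 * ⟪etil t, vec2 (sin (θi t)) (-cos (θi t))⟫ ^ 2 := by
      rw [hS]
      exact algebra_step (fun k => v k t)
        (fun k => ⟪etil t, hess J (p k t) (vec2 (cos (θ k t)) (sin (θ k t)))⟫)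
        (fun k => ⟪vec2 (cos (θi t)) (sin (θi t)),
          hess J (p k t) (vec2 (cos (θ k t)) (sin (θ k t)))⟫)
        (fun k => ⟪vec2 (sin (θi t)) (-cos (θi t)),
          rotR (hess J (pi t) (rotR (hess J (p k t)
            (vec2 (cos (θ k t)) (sin (θ k t))))))⟫)
        ((Fintype.card ι : ℝ))
        ⟪etil t, hess J (pi t) (vec2 (cos (θi t)) (sin (θi t)))⟫
        ⟪etil t, vec2 (sin (θi t)) (-cos (θi t))⟫
        ⟪vec2 (cos (θi t)) (sin (θi t)),
          hess J (pi t) (vec2 (cos (θi t)) (sin (θi t)))⟫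
        k1 k2 dstar (vi t) (ωi t) hc0 hdstar.ne' hkey (hvi t ht) (hωi t ht)
    rw [← hval]
    exact hd
  have hle : ∀ t : ℝ,
      -k1 * ⟪etil t, hess J (pi t) (vec2 (cos (θi t)) (sin (θi t)))⟫ ^ 2
        - k2 * ⟪etil t, vec2 (sin (θi t)) (-cos (θi t))⟫ ^ 2 ≤ 0 := by
    intro t
    have h1 := mul_nonneg hk1 (sq_nonneg ⟪etil t, hess J (pi t) (vec2 (cos (θi t)) (sin (θi t)))⟫)
    have h2 := mul_nonneg hk2 (sq_nonneg ⟪etil t, vec2 (sin (θi t)) (-cos (θi t))⟫)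
    linarith
  refine ⟨fun t ht => ⟨hmain t ht, hle t⟩, ?_⟩
  have hanti : AntitoneOn (fun s => (1 / 2) * ‖etil s‖ ^ 2) (Set.Ici 0) := by
    apply antitoneOn_of_deriv_nonpos (convex_Ici 0)
    · exact fun x hx => (hmain x hx).continuousAt.continuousWithinAt
    · intro x hx
      rw [interior_Ici] at hx
      exact ((hmain x (le_of_lt hx)).differentiableAt).differentiableWithinAt
    · intro x hx
      rw [interior_Ici] at hx
      rw [(hmain x (le_of_lt hx)).deriv]
      exact hle x
  intro s hs t ht hst
  have := hanti hs ht hst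
  have h1 := norm_nonneg (etil s)
  have h2 := norm_nonneg (etil t)
  simp only at this ⊢
  nlinarith
end

section
/- Let α : ℝ → ℝ be a locally Lipschitz extended class-K function, and let D, P : [0,∞) → ℝ be differentiable. Define h(t) = D(t) e^{−P(t)} and suppose h′(t) ≥ −α(h(t)) for all t ≥ 0 and D(0) ≥ 0. Then D(t) ≥ 0 for all t ≥ 0. -/
/-- Obstacle-avoidance ZCBF: let `α` be a locally Lipschitz extended
class-K function, `D, P` differentiable, and `h = D e^{−P}`.  If `h′(t) ≥ −α(h(t))` for all
`t ≥ 0` and `D(0) ≥ 0`, then `D(t) ≥ 0` for all `t ≥ 0`. -/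
theorem stmt_15 (α : ℝ → ℝ) (hlip : LocallyLipschitz α)
    (hα0 : α 0 = 0) (hmono : StrictMono α)
    (D P D' P' : ℝ → ℝ)
    (hD : ∀ t ≥ (0:ℝ), HasDerivAt D (D' t) t)
    (hP : ∀ t ≥ (0:ℝ), HasDerivAt P (P' t) t)
    (hineq : ∀ t ≥ (0:ℝ),
      D' t * Real.exp (-P t) - D t * P' t * Real.exp (-P t) ≥
        -α (D t * Real.exp (-P t)))
    (hD0 : D 0 ≥ 0) :
    ∀ t ≥ (0:ℝ), D t ≥ 0 := by
  set h : ℝ → ℝ := fun s => D s * Real.exp (-P s) with hh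
  have hderiv : ∀ x ≥ (0:ℝ), HasDerivAt h
      (D' x * Real.exp (-P x) - D x * P' x * Real.exp (-P x)) x := by
    intro x hx
    have := (hD x hx).mul (((hP x hx).neg).exp)
    refine HasDerivAt.congr_deriv this ?_
    simp only [Pi.neg_apply]
    ring
  intro t ht
  by_contra hneg
  push_neg at hneg
  have hht : h t < 0 := by
    have := Real.exp_pos (-P t)
    simp only [hh]
    nlinarith
  have ht0 : 0 < t := by
    rcases lt_or_eq_of_le ht with h' | h'
    · exact h'
    · exact absurd (h' ▸ hD0) (not_le.mpr hneg)
  have hcont : ContinuousOn h (Set.Icc 0 t) := fun x hx =>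
    ((hderiv x hx.1).continuousAt).continuousWithinAt
  -- the set of times in [0,t] where h is nonnegative
  set S : Set ℝ := Set.Icc (0:ℝ) t ∩ h ⁻¹' Set.Ici 0 with hS
  have h0S : (0:ℝ) ∈ S := by
    constructor
    · exact ⟨le_refl _, le_of_lt ht0⟩
    · simp only [Set.mem_preimage, Set.mem_Ici, hh]
      positivity
  have hSne : S.Nonempty := ⟨0, h0S⟩
  have hSbdd : BddAbove S := ⟨t, fun x hx => hx.1.2⟩
  have hSclosed : IsClosed S :=
    hcont.preimage_isClosed_of_isClosed isClosed_Icc isClosed_Ici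
  set s₀ := sSup S with hs₀
  have hs₀S : s₀ ∈ S := hSclosed.csSup_mem hSne hSbdd
  have hs₀0 : 0 ≤ s₀ := hs₀S.1.1
  have hs₀t : s₀ ≤ t := hs₀S.1.2
  have hhs₀ : 0 ≤ h s₀ := hs₀S.2
  have hs₀lt : s₀ < t := lt_of_le_of_ne hs₀t fun he =>
    absurd (he ▸ hhs₀) (not_le.mpr hht)
  -- on (s₀, t], h is negative
  have hnegIoc : ∀ u ∈ Set.Ioc s₀ t, h u < 0 := by
    intro u hu
    by_contra hcon
    push_neg at hcon
    have : u ∈ S := ⟨⟨le_trans hs₀0 hu.1.le, hu.2⟩, hcon⟩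
    exact absurd (le_csSup hSbdd this) (not_le.mpr hu.1)
  -- hence h strictly increases on [s₀, t]
  have hmonoOn : StrictMonoOn h (Set.Icc s₀ t) := by
    apply strictMonoOn_of_deriv_pos (convex_Icc _ _)
    · exact hcont.mono (Set.Icc_subset_Icc hs₀0 le_rfl)
    · intro x hx
      rw [interior_Icc] at hx
      have hx0 : (0:ℝ) ≤ x := le_trans hs₀0 hx.1.le
      rw [(hderiv x hx0).deriv]
      have hhx : h x < 0 := hnegIoc x ⟨hx.1, hx.2.le⟩
      have : α (h x) < α 0 := hmono hhx
      rw [hα0] at this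
      have := hineq x hx0
      simp only [hh] at *
      linarith
  have := hmonoOn ⟨le_rfl, hs₀t⟩ ⟨hs₀lt.le, le_rfl⟩ hs₀lt
  linarith
end

section
/- Let 0 < d_r < r, let α : ℝ → ℝ be a locally Lipschitz extended class-K function, let γ : [0,∞) → ℝ be continuous, and let μ, P_{ij}, P_{ji} : [0,∞) → ℝ be differentiable. Define h(t) = (μ(t) − d_r)(r − μ(t))(e^{−P_{ij}(t)} + e^{−P_{ji}(t)}) and suppose h′(t) ≥ −γ(t) α(h(t)) for all t ≥ 0 and d_r < μ(0) < r. Then d_r ≤ μ(t) ≤ r for all t ≥ 0. -/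
/-- Connectivity preservation and inter-agent collision avoidance:
let `0 < d_r < r`, `α` a locally Lipschitz extended class-K function, `γ` continuous, and
`μ, P_{ij}, P_{ji}` differentiable.  If the inter-agent ZCBF
`h = (μ − d_r)(r − μ)(e^{−P_{ij}} + e^{−P_{ji}})` satisfies `h′(t) ≥ −γ(t) α(h(t))` for all
`t ≥ 0` and `d_r < μ(0) < r`, then `d_r ≤ μ(t) ≤ r` for all `t ≥ 0`. -/
theorem stmt_16 (dr r : ℝ) (h1 : 0 < dr) (h2 : dr < r)
    (α : ℝ → ℝ) (hlip : LocallyLipschitz α) (hα0 : α 0 = 0) (hmono : StrictMono α)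
    (γ : ℝ → ℝ) (hγ : Continuous γ)
    (μ Pij Pji : ℝ → ℝ)
    (hμ : Differentiable ℝ μ) (hPij : Differentiable ℝ Pij) (hPji : Differentiable ℝ Pji)
    (h : ℝ → ℝ)
    (hdef : ∀ t, h t =
      (μ t - dr) * (r - μ t) * (Real.exp (-Pij t) + Real.exp (-Pji t)))
    (hderiv : ∀ t ≥ (0:ℝ), deriv h t ≥ -γ t * α (h t))
    (h0 : dr < μ 0 ∧ μ 0 < r) :
    ∀ t ≥ (0:ℝ), dr ≤ μ t ∧ μ t ≤ r := by
  have hfun : h = fun t => (μ t - dr) * (r - μ t) * (Real.exp (-Pij t) + Real.exp (-Pji t)) :=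
    funext hdef
  have hdiff : Differentiable ℝ h := by
    rw [hfun]; fun_prop
  have hcont : Continuous h := hdiff.continuous
  have hh0 : 0 < h 0 := by
    rw [hdef 0]
    have e1 : 0 < Real.exp (-Pij 0) + Real.exp (-Pji 0) := by positivity
    have := mul_pos (mul_pos (sub_pos.mpr h0.1) (sub_pos.mpr h0.2)) e1
    linarith
  -- main claim: h is nonneg on [0, ∞)
  have key : ∀ t ≥ (0:ℝ), 0 ≤ h t := by
    by_contra hk
    push_neg at hk
    obtain ⟨T, hT0, hTneg⟩ := hk
    obtain ⟨A, hA⟩ : ∃ A : Set ℝ, A = Set.Icc 0 T ∩ {t | 0 ≤ h t} := ⟨_, rfl⟩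
    have hAne : A.Nonempty := ⟨0, hA ▸ ⟨⟨le_refl 0, hT0⟩, hh0.le⟩⟩
    have hAcl : IsClosed A := hA ▸ (isClosed_Icc.inter (isClosed_le continuous_const hcont))
    have hAbdd : BddAbove A := ⟨T, fun x hx => (hA ▸ hx).1.2⟩
    obtain ⟨s, hs⟩ : ∃ s : ℝ, s = sSup A := ⟨_, rfl⟩
    have hsA : s ∈ A := hs ▸ hAcl.csSup_mem hAne hAbdd
    have hs0 : 0 ≤ s := (hA ▸ hsA).1.1
    have hsT : s ≤ T := (hA ▸ hsA).1.2
    have hsnn : 0 ≤ h s := (hA ▸ hsA).2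
    have hneg : ∀ t, s < t → t ≤ T → h t < 0 := by
      intro t hst htT
      by_contra hc
      push_neg at hc
      have hmem : t ∈ A := hA ▸ ⟨⟨hs0.trans hst.le, htT⟩, hc⟩
      exact absurd (hs ▸ le_csSup hAbdd hmem) (not_le.mpr hst)
    have hhs : h s = 0 := by
      rcases lt_trichotomy (h s) 0 with hl | he | hg
      · exact absurd hsnn (not_le.mpr hl)
      · exact he
      · have hsT' : s < T := by
          rcases eq_or_lt_of_le hsT with rfl | hlt
          · exact absurd hg (not_lt.mpr hTneg.le)
          · exact hlt
        obtain ⟨ε, hε, hball⟩ := Metric.eventually_nhds_iff.mp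
          ((hcont.tendsto s).eventually (eventually_gt_nhds hg))
        have hst : s < min (s + ε / 2) T := lt_min (by linarith) hsT'
        have htT : min (s + ε / 2) T ≤ T := min_le_right _ _
        have hdist : dist (min (s + ε / 2) T) s < ε := by
          rw [Real.dist_eq, abs_of_pos (by linarith)]
          have : min (s + ε / 2) T ≤ s + ε / 2 := min_le_left _ _
          linarith
        have hmem : min (s + ε / 2) T ∈ A :=
          hA ▸ ⟨⟨hs0.trans hst.le, htT⟩, (hball hdist).le⟩
        have h6 := le_csSup hAbdd hmem
        rw [← hs] at h6
        exact absurd h6 (not_le.mpr hst)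
    have hsT' : s < T := by
      rcases eq_or_lt_of_le hsT with rfl | hlt
      · rw [hhs] at hTneg; exact absurd hTneg (lt_irrefl 0)
      · exact hlt
    -- local Lipschitz constant near 0
    obtain ⟨K, U, hU, hKU⟩ := hlip 0
    obtain ⟨ε, hε, hballU⟩ := Metric.mem_nhds_iff.mp hU
    -- continuity of h at s : |h t| < ε near s
    obtain ⟨δ, hδ, hballh⟩ := Metric.eventually_nhds_iff.mp
      ((hcont.tendsto s).eventually (Metric.ball_mem_nhds (h s) hε))
    obtain ⟨b, hb⟩ : ∃ b : ℝ, b = min (s + δ / 2) T := ⟨_, rfl⟩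
    have hsb : s < b := hb ▸ lt_min (by linarith) hsT'
    have hbT : b ≤ T := hb ▸ min_le_right _ _
    have hmem : ∀ t ∈ Set.Icc s b, h t ∈ U := by
      intro t htm
      apply hballU
      have hds : dist t s < δ := by
        rw [Real.dist_eq, abs_of_nonneg (by linarith [htm.1])]
        have : t ≤ s + δ / 2 := le_trans htm.2 (by rw [hb]; exact min_le_left _ _)
        linarith
      have h5 := hballh hds
      rw [hhs] at h5
      exact Metric.mem_ball.mpr h5
    have h0U : (0:ℝ) ∈ U := by
      have := hmem s ⟨le_refl s, hsb.le⟩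
      rwa [hhs] at this
    -- bound γ on [s, b]
    obtain ⟨x, -, hM⟩ := isCompact_Icc.exists_isMaxOn (Set.nonempty_Icc.mpr hsb.le)
      ((hγ.abs).continuousOn (s := Set.Icc s b))
    obtain ⟨M, hMdef⟩ : ∃ M : ℝ, M = |γ x| := ⟨_, rfl⟩
    have hM' : ∀ t ∈ Set.Icc s b, |γ t| ≤ M := fun t ht => hMdef ▸ hM ht
    have hM0 : 0 ≤ M := le_trans (abs_nonneg _) (hM' s ⟨le_refl s, hsb.le⟩)
    obtain ⟨c, hcc⟩ : ∃ c : ℝ, c = M * K := ⟨_, rfl⟩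
    have hc0 : 0 ≤ c := hcc ▸ mul_nonneg hM0 K.2
    -- monotone function f t = h t * exp (-c t)
    have hfd : ∀ t : ℝ, HasDerivAt (fun u => h u * Real.exp (-c * u))
        (deriv h t * Real.exp (-c * t) + h t * (-c * Real.exp (-c * t))) t := by
      intro t
      have h1' : HasDerivAt h (deriv h t) t := (hdiff t).hasDerivAt
      have h2' : HasDerivAt (fun u : ℝ => Real.exp (-c * u)) (-c * Real.exp (-c * t)) t := by
        have := (Real.hasDerivAt_exp (-c * t)).comp t ((hasDerivAt_id t).const_mul (-c))
        simpa [Function.comp_def, mul_comm] using this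
      exact h1'.mul h2'
    have hmono' : MonotoneOn (fun u => h u * Real.exp (-c * u)) (Set.Icc s b) := by
      apply monotoneOn_of_deriv_nonneg (convex_Icc s b)
        (Continuous.continuousOn (by fun_prop))
        (fun t _ => ((hfd t).differentiableAt).differentiableWithinAt)
      intro t htm
      rw [interior_Icc] at htm
      rw [(hfd t).deriv]
      have ht0 : (0:ℝ) ≤ t := hs0.trans htm.1.le
      have hht : h t < 0 := hneg t htm.1 (htm.2.le.trans hbT)
      have hαb : |α (h t)| ≤ (K:ℝ) * |h t| := by
        have := hKU.dist_le_mul (h t) (hmem t ⟨htm.1.le, htm.2.le⟩) 0 h0U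
        simpa [hα0, Real.dist_eq] using this
      have hγb : |γ t| ≤ M := hM' t ⟨htm.1.le, htm.2.le⟩
      have hd := hderiv t ht0
      have h3 : -(|γ t| * |α (h t)|) ≤ -γ t * α (h t) := by
        rw [neg_mul, ← abs_mul]
        exact neg_le_neg (le_abs_self _)
      have h4 : |γ t| * |α (h t)| ≤ M * ((K:ℝ) * |h t|) :=
        mul_le_mul hγb hαb (abs_nonneg _) hM0
      have h5 : |h t| = -h t := abs_of_neg hht
      rw [h5] at h4
      have hkey : deriv h t - c * h t ≥ 0 := by
        rw [hcc]; nlinarith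
      have hexp : 0 < Real.exp (-c * t) := Real.exp_pos _
      nlinarith
    have hfin := hmono' (Set.left_mem_Icc.mpr hsb.le) (Set.right_mem_Icc.mpr hsb.le) hsb.le
    simp only [hhs, zero_mul] at hfin
    have hhb : h b < 0 := hneg b hsb hbT
    nlinarith [Real.exp_pos (-c * b)]
  -- conclude
  intro t ht
  have hk := key t ht
  rw [hdef t] at hk
  have e1 : 0 < Real.exp (-Pij t) + Real.exp (-Pji t) := by positivity
  have hq : 0 ≤ (μ t - dr) * (r - μ t) := by
    by_contra hc
    push_neg at hc
    nlinarith [mul_neg_of_neg_of_pos hc e1]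
  constructor
  · by_contra hc
    push_neg at hc
    nlinarith [mul_neg_of_neg_of_pos (by linarith : μ t - dr < 0) (by linarith : (0:ℝ) < r - μ t)]
  · by_contra hc
    push_neg at hc
    nlinarith [mul_neg_of_pos_of_neg (by linarith : (0:ℝ) < μ t - dr) (by linarith : r - μ t < 0)]
end
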